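/- Consider the q-level hierarchical SVD algorithm applied to A ∈ ℂ^{D×N} partitioned into M = n^q column blocks: at each level, groups of n current blocks are replaced by the concatenation of the rank-d truncated scaled left singular vector matrices ((U Σ)_d) of each block. Then the final output matrix B^{q+1,1} satisfies: there exists a unitary matrix W with (B^{q+1,1})_d (in scaled left-singular-vector form) = A W + Ψ, where ‖Ψ‖_F ≤ ((1+√2)^{q+1} − 1) · ‖(A)_d − A‖_F. -/

import Mathlib

/-!
Write `‖·‖` for the Frobenius norm and fix any `N` of rank at most `d` (in the end `N = (A)_d`).
If `W` is unitary and `Bd` is a best rank-`d` approximation of `B`, then, since `N W` also has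
rank at most `d`,
`‖Bd - A W‖ ≤ ‖Bd - B‖ + ‖B - A W‖ ≤ ‖N W - B‖ + ‖B - A W‖ ≤ ‖N - A‖ + 2 ‖B - A W‖`,
and passing to the scaled left-singular-vector form only multiplies by another unitary. So every
truncation turns an error constant `c` into `2 c + 1`. At each level the blockwise bounds
assemble through a block-diagonal unitary, because `‖·‖²` is additive over column blocks. Hence
the output of `q` levels is within `(2 ^ q - 1) ‖N - A‖` of a rotation of `A`, and the final
truncation gives the constant `2 ^ (q + 1) - 1 ≤ (1 + √2) ^ (q + 1) - 1`.
-/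

open Matrix

/-- Frobenius norm of a complex matrix. -/
noncomputable def frob {m n : Type*} [Fintype m] [Fintype n] (M : Matrix m n ℂ) : ℝ :=
  Real.sqrt (∑ i, ∑ j, ‖M i j‖ ^ 2)

/-- `B` is a best rank-`d` approximation of `A` in Frobenius norm. -/
def IsBestRankApprox {m n : Type*} [Fintype m] [Fintype n] (d : ℕ)
    (A B : Matrix m n ℂ) : Prop :=
  B.rank ≤ d ∧ ∀ C : Matrix m n ℂ, C.rank ≤ d → frob (B - A) ≤ frob (C - A)

/-- The singular values of `M` : nonnegative square roots of the eigenvalues of `M * Mᴴ`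
(unsorted enumeration). -/
noncomputable def singVals {D : ℕ} {n : Type*} [Fintype n] (M : Matrix (Fin D) n ℂ) :
    Fin D → ℝ :=
  fun i => Real.sqrt ((Matrix.isHermitian_mul_conjTranspose_self M).eigenvalues i)

/-- `C` is a scaled left-singular-vector form of `M`, i.e. `C = U Σ = M V` for some
SVD `M = U Σ Vᴴ` of `M`: equivalently `C = M V` with `V` unitary and `Cᴴ C` diagonal with
nonnegative real entries. -/
def IsScaledLeftSV {D : ℕ} {n : Type*} [Fintype n] [DecidableEq n]
    (M C : Matrix (Fin D) n ℂ) : Prop :=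
  ∃ V ∈ Matrix.unitaryGroup n ℂ, C = M * V ∧
    ∃ t : n → ℝ, (∀ j, 0 ≤ t j) ∧ Cᴴ * C = Matrix.diagonal (fun j => (t j : ℂ))
attribute [irreducible] frob IsBestRankApprox IsScaledLeftSV

/-- `HierOut D d q A B` : `B` is a possible output of `q` levels of the hierarchical SVD
algorithm applied to `A` with truncation rank `d`: at each level the current blocks are grouped,
and each group is replaced by the concatenation of the scaled left-singular-vector forms
`overline{(·)_d}` of the rank-`d` truncations of its member blocks (`B^{1,i} = A^i`,
`B^{p+1,i} = [overline{(B^{p,(i-1)n+1})_d} | ... | overline{(B^{p,in})_d}]`). -/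
inductive HierOut (D d : ℕ) :
    {ι : Type} → ℕ → Matrix (Fin D) ι ℂ → Matrix (Fin D) ι ℂ → Prop
  | base {ι : Type} (A : Matrix (Fin D) ι ℂ) : HierOut D d 0 A A
  | step {n : ℕ} {ιs : Fin n → Type} [∀ j, Fintype (ιs j)] [∀ j, DecidableEq (ιs j)] {q : ℕ}
      (A : Matrix (Fin D) ((j : Fin n) × ιs j) ℂ)
      (Bp Bd Cc : (j : Fin n) → Matrix (Fin D) (ιs j) ℂ)
      (hrec : ∀ j, HierOut D d q (Matrix.of fun r c => A r ⟨j, c⟩) (Bp j))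
      (hBd : ∀ j, IsBestRankApprox d (Bp j) (Bd j))
      (hC : ∀ j, IsScaledLeftSV (Bd j) (Cc j)) :
      HierOut D d (q + 1) A (Matrix.of fun r (p : (j : Fin n) × ιs j) => Cc p.1 r p.2)

open scoped Matrix.Norms.Frobenius

namespace Matrix

section Frobenius

variable {α 𝕜 : Type*} [RCLike 𝕜] {m n : Type*} [Fintype m] [Fintype n]

theorem frobenius_norm_sq_eq_sum [SeminormedAddCommGroup α] (M : Matrix m n α) :
    ‖M‖ ^ 2 = ∑ i, ∑ j, ‖M i j‖ ^ 2 := by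
  rw [frobenius_norm_def, ← Real.rpow_natCast, ← Real.rpow_mul (by positivity)]
  simp only [Real.rpow_two]
  norm_num

theorem frobenius_norm_sq_eq_trace (M : Matrix m n 𝕜) :
    ((‖M‖ ^ 2 : ℝ) : 𝕜) = (M * Mᴴ).trace := by
  simp only [frobenius_norm_sq_eq_sum, trace, diag_apply, mul_apply, conjTranspose_apply,
    RCLike.star_def, RCLike.mul_conj]
  push_cast
  rfl

theorem frobenius_norm_mul_unitary [DecidableEq n] (M : Matrix m n 𝕜) {V : Matrix n n 𝕜}
    (hV : V ∈ unitaryGroup n 𝕜) : ‖M * V‖ = ‖M‖ := by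
  have hVV : V * Vᴴ = 1 := mem_unitaryGroup_iff.mp hV
  have hsq : ((‖M * V‖ ^ 2 : ℝ) : 𝕜) = ((‖M‖ ^ 2 : ℝ) : 𝕜) := by
    rw [frobenius_norm_sq_eq_trace, frobenius_norm_sq_eq_trace, conjTranspose_mul,
      Matrix.mul_assoc, ← Matrix.mul_assoc V, hVV, Matrix.one_mul]
  exact (pow_left_inj₀ (norm_nonneg _) (norm_nonneg _) two_ne_zero).mp (RCLike.ofReal_injective hsq)

end Frobenius

section SigmaBlocks

variable {α 𝕜 : Type*} [RCLike 𝕜] {m κ : Type*} [Fintype κ] {ιs : κ → Type*}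
  [∀ j, Fintype (ιs j)]

theorem frobenius_norm_sq_eq_sum_submatrix_sigma [Fintype m] [SeminormedAddCommGroup α]
    (M : Matrix m (Σ j, ιs j) α) :
    ‖M‖ ^ 2 = ∑ j, ‖M.submatrix id (Sigma.mk j)‖ ^ 2 := by
  simp only [frobenius_norm_sq_eq_sum, Fintype.sum_sigma, submatrix_apply, id]
  exact Finset.sum_comm

theorem frobenius_norm_le_of_forall_submatrix_sigma [Fintype m] [SeminormedAddCommGroup α]
    {X Y : Matrix m (Σ j, ιs j) α} {c : ℝ} (hc : 0 ≤ c)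
    (h : ∀ j, ‖X.submatrix id (Sigma.mk j)‖ ≤ c * ‖Y.submatrix id (Sigma.mk j)‖) :
    ‖X‖ ≤ c * ‖Y‖ := by
  refine (pow_le_pow_iff_left₀ (norm_nonneg _) (by positivity) two_ne_zero).mp ?_
  rw [mul_pow, frobenius_norm_sq_eq_sum_submatrix_sigma, frobenius_norm_sq_eq_sum_submatrix_sigma,
    Finset.mul_sum]
  gcongr with j
  rw [← mul_pow]
  exact pow_le_pow_left₀ (norm_nonneg _) (h j) 2

variable [DecidableEq κ]

theorem submatrix_mul_blockDiagonal' [NonUnitalNonAssocSemiring α] (A : Matrix m (Σ j, ιs j) α)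
    (W : ∀ j, Matrix (ιs j) (ιs j) α) (j : κ) :
    (A * blockDiagonal' W).submatrix id (Sigma.mk j) = A.submatrix id (Sigma.mk j) * W j := by
  ext r c
  simp only [submatrix_apply, id, mul_apply, Fintype.sum_sigma]
  rw [Finset.sum_eq_single j (fun k _ hk => by simp [blockDiagonal'_apply_ne _ _ _ hk])
    (by simp)]
  simp [blockDiagonal'_apply_eq]

theorem blockDiagonal'_mem_unitaryGroup [∀ j, DecidableEq (ιs j)]
    {W : ∀ j, Matrix (ιs j) (ιs j) 𝕜} (hW : ∀ j, W j ∈ unitaryGroup (ιs j) 𝕜) :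
    blockDiagonal' W ∈ unitaryGroup (Σ j, ιs j) 𝕜 := by
  rw [mem_unitaryGroup_iff, star_eq_conjTranspose, blockDiagonal'_conjTranspose,
    ← blockDiagonal'_mul]
  have hWW : (fun j => W j * (W j)ᴴ) = 1 := funext fun j => mem_unitaryGroup_iff.mp (hW j)
  rw [hWW, blockDiagonal'_one]

end SigmaBlocks

end Matrix

section Frob

variable {m n : Type*} [Fintype m] [Fintype n]

theorem frob_eq_norm (M : Matrix m n ℂ) : frob M = ‖M‖ := by
  unfold frob
  rw [← frobenius_norm_sq_eq_sum, Real.sqrt_sq (norm_nonneg _)]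

theorem IsBestRankApprox.rank_le {d : ℕ} {B Bd : Matrix m n ℂ} (h : IsBestRankApprox d B Bd) :
    Bd.rank ≤ d := by
  unfold IsBestRankApprox at h
  exact h.1

theorem IsBestRankApprox.norm_sub_le_of_rank_le {d : ℕ} {B Bd N : Matrix m n ℂ}
    (h : IsBestRankApprox d B Bd) (hN : N.rank ≤ d) : ‖Bd - B‖ ≤ ‖N - B‖ := by
  unfold IsBestRankApprox at h
  simpa only [frob_eq_norm] using h.2 N hN

theorem IsBestRankApprox.norm_sub_mul_unitary_le [DecidableEq n] {d : ℕ}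
    {A B Bd N : Matrix m n ℂ} {W : Matrix n n ℂ} (h : IsBestRankApprox d B Bd) (hN : N.rank ≤ d)
    (hW : W ∈ unitaryGroup n ℂ) :
    ‖Bd - A * W‖ ≤ ‖N - A‖ + 2 * ‖B - A * W‖ := by
  have hNW : ‖N * W - B‖ ≤ ‖N - A‖ + ‖B - A * W‖ := calc
    ‖N * W - B‖ = ‖(N - A) * W - (B - A * W)‖ := by rw [Matrix.sub_mul]; abel_nf
    _ ≤ ‖(N - A) * W‖ + ‖B - A * W‖ := norm_sub_le _ _
    _ = ‖N - A‖ + ‖B - A * W‖ := by rw [frobenius_norm_mul_unitary _ hW]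
  calc ‖Bd - A * W‖ ≤ ‖Bd - B‖ + ‖B - A * W‖ := norm_sub_le_norm_sub_add_norm_sub _ _ _
    _ ≤ ‖N * W - B‖ + ‖B - A * W‖ := by
      gcongr; exact h.norm_sub_le_of_rank_le ((rank_mul_le_left _ _).trans hN)
    _ ≤ ‖N - A‖ + 2 * ‖B - A * W‖ := by linarith

end Frob

section ScaledLeftSV

variable {D : ℕ} {n : Type*} [Fintype n] [DecidableEq n]

theorem IsScaledLeftSV.exists_unitary_eq_mul {M C : Matrix (Fin D) n ℂ}
    (h : IsScaledLeftSV M C) : ∃ V ∈ unitaryGroup n ℂ, C = M * V := by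
  unfold IsScaledLeftSV at h
  obtain ⟨V, hV, hC, -⟩ := h
  exact ⟨V, hV, hC⟩

theorem IsScaledLeftSV.exists_unitary_norm_sub_le {d : ℕ} {A B Bd C N : Matrix (Fin D) n ℂ}
    {W : Matrix n n ℂ} {c : ℝ} (hW : W ∈ unitaryGroup n ℂ) (hB : ‖B - A * W‖ ≤ c * ‖N - A‖)
    (hBd : IsBestRankApprox d B Bd) (hC : IsScaledLeftSV Bd C) (hN : N.rank ≤ d) :
    ∃ W' ∈ unitaryGroup n ℂ, ‖C - A * W'‖ ≤ (2 * c + 1) * ‖N - A‖ := by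
  obtain ⟨V, hV, rfl⟩ := hC.exists_unitary_eq_mul
  refine ⟨W * V, mul_mem hW hV, ?_⟩
  calc ‖Bd * V - A * (W * V)‖ = ‖Bd - A * W‖ := by
        rw [← Matrix.mul_assoc, ← Matrix.sub_mul, frobenius_norm_mul_unitary _ hV]
    _ ≤ ‖N - A‖ + 2 * ‖B - A * W‖ := hBd.norm_sub_mul_unitary_le hN hW
    _ ≤ (2 * c + 1) * ‖N - A‖ := by linarith

end ScaledLeftSV

theorem HierOut.exists_unitary_norm_sub_le {D d q : ℕ} {ι : Type} {A B : Matrix (Fin D) ι ℂ}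
    (h : HierOut D d q A B) :
    ∀ [Fintype ι] [DecidableEq ι] {N : Matrix (Fin D) ι ℂ}, N.rank ≤ d →
      ∃ W ∈ unitaryGroup ι ℂ, ‖B - A * W‖ ≤ (2 ^ q - 1) * ‖N - A‖ := by
  induction h with
  | base A => exact fun _ => ⟨1, one_mem _, by simp⟩
  | @step n ιs _ _ q A Bp Bd Cc _ hBd hC ih =>
    intro instFintype instDecEq N hN
    obtain rfl : instFintype = Sigma.instFintype := Subsingleton.elim _ _
    obtain rfl : instDecEq = Sigma.instDecidableEqSigma := Subsingleton.elim _ _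
    have hblock (j : Fin n) : ∃ W ∈ unitaryGroup (ιs j) ℂ,
        ‖Cc j - A.submatrix id (Sigma.mk j) * W‖
          ≤ (2 * (2 ^ q - 1) + 1) * ‖(N - A).submatrix id (Sigma.mk j)‖ := by
      have hNj := (rank_submatrix_le N id (Sigma.mk j)).trans hN
      obtain ⟨W, hW, hBp⟩ := ih j hNj
      exact (hC j).exists_unitary_norm_sub_le hW hBp (hBd j) hNj
    choose W hW hCc using hblock
    simp_rw [← submatrix_mul_blockDiagonal'] at hCc
    have hc : (0 : ℝ) ≤ 2 * (2 ^ q - 1) + 1 := by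
      linarith [one_le_pow₀ (n := q) (one_le_two (α := ℝ))]
    rw [show (2 ^ (q + 1) - 1 : ℝ) = 2 * (2 ^ q - 1) + 1 by ring]
    exact ⟨blockDiagonal' W, blockDiagonal'_mem_unitaryGroup hW,
      frobenius_norm_le_of_forall_submatrix_sigma hc hCc⟩

theorem stmt15_general {D : ℕ} {ι : Type} [Fintype ι] [DecidableEq ι]
    (d q : ℕ)
    (A B : Matrix (Fin D) ι ℂ)
    (h : HierOut D d q A B)
    (Bd : Matrix (Fin D) ι ℂ) (hBd : IsBestRankApprox d B Bd)
    (C : Matrix (Fin D) ι ℂ) (hC : IsScaledLeftSV Bd C)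
    (Ad : Matrix (Fin D) ι ℂ) (hAd : IsBestRankApprox d A Ad) :
    ∃ W ∈ Matrix.unitaryGroup ι ℂ, ∃ Ψ : Matrix (Fin D) ι ℂ,
      C = A * W + Ψ ∧
      frob Ψ ≤ ((1 + Real.sqrt 2) ^ (q + 1) - 1) * frob (Ad - A) := by
  obtain ⟨W, hW, hB⟩ := h.exists_unitary_norm_sub_le hAd.rank_le
  obtain ⟨W', hW', hC⟩ := hC.exists_unitary_norm_sub_le hW hB hBd hAd.rank_le
  have hconst : (2 * (2 ^ q - 1) + 1 : ℝ) ≤ (1 + Real.sqrt 2) ^ (q + 1) - 1 := by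
    have h2 : (2 : ℝ) ≤ 1 + Real.sqrt 2 := by
      linarith [Real.one_le_sqrt.mpr one_le_two]
    linarith [pow_le_pow_left₀ zero_le_two h2 (q + 1), pow_succ (2 : ℝ) q]
  refine ⟨W', hW', C - A * W', by abel, ?_⟩
  rw [frob_eq_norm, frob_eq_norm]
  exact hC.trans (mul_le_mul_of_nonneg_right hconst (norm_nonneg _))

/-- Error bound for the `q`-level hierarchical SVD algorithm: if `B` is the output of `q` merge
levels applied to `A` (`B = B^{q+1,1}`) and `C` is the scaled left-singular-vector form of a
best rank-`d` approximation of `B`, then `C = A W + Ψ` with `W` unitary and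
`‖Ψ‖_F ≤ ((1+√2)^{q+1} − 1) ‖(A)_d − A‖_F`. -/
theorem stmt15 {D : ℕ} {ι : Type} [Fintype ι] [DecidableEq ι]
    (d q : ℕ) (hq : 1 ≤ q)
    (A B : Matrix (Fin D) ι ℂ)
    (h : HierOut D d q A B)
    (Bd : Matrix (Fin D) ι ℂ) (hBd : IsBestRankApprox d B Bd)
    (C : Matrix (Fin D) ι ℂ) (hC : IsScaledLeftSV Bd C)
    (Ad : Matrix (Fin D) ι ℂ) (hAd : IsBestRankApprox d A Ad) :
    ∃ W ∈ Matrix.unitaryGroup ι ℂ, ∃ Ψ : Matrix (Fin D) ι ℂ,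
      C = A * W + Ψ ∧
      frob Ψ ≤ ((1 + Real.sqrt 2) ^ (q + 1) - 1) * frob (Ad - A) :=
  stmt15_general d q A B h Bd hBd C hC Ad hAd
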